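/- arXiv:2301.09765 — 4 statements merged into one kernel-verified Lean document; each statement's English description precedes it below -/
import Mathlib

section
/- The bivariate generating function G₁(t,x) = Σ_{d≥0} Σ_{e≥d} T₁(e;d) x^d t^e satisfies G₁(t,x) = 1 + t·x·G₁(t,x)·C(t), where C(t) is the Catalan generating function and T₁(e;d) = (d/e)·C(2e−d−1, e−1) with T₁(0;0)=1. -/
/-- Number of rooted plane trees with `e` edges and root degree `d`. -/
noncomputable def T1 (e d : ℕ) : ℚ :=
  if e = 0 ∧ d = 0 then 1
  else if 1 ≤ d ∧ d ≤ e then (d : ℚ) / e * Nat.choose (2 * e - d - 1) (e - 1)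
  else 0

/-- Generating function of the Catalan numbers. -/
noncomputable def catalanPS : PowerSeries ℚ := PowerSeries.mk fun e => (catalan e : ℚ)

/-- `G₁(t,x) = Σ_d Σ_e T₁(e;d) x^d t^e`, with `x` the outer variable and `t` the inner. -/
noncomputable def G1 : PowerSeries (PowerSeries ℚ) :=
  PowerSeries.mk fun d => PowerSeries.mk fun e => T1 e d

noncomputable def B : PowerSeries ℚ := PowerSeries.X * catalanPS

open PowerSeries

lemma catalanPS_eq : catalanPS = 1 + X * catalanPS ^ 2 := by
  ext n
  cases n with
  | zero => simp [catalanPS]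
  | succ n =>
    rw [map_add, coeff_succ_X_mul, sq, coeff_mul]
    simp [catalanPS, coeff_mk, coeff_one, catalan_succ' n, Nat.cast_sum]

lemma B_eq : B = X + B ^ 2 := by
  have h := catalanPS_eq
  rw [B]
  nth_rewrite 1 [h]
  ring

lemma coeff_B_pow_zero_of_lt {e d : ℕ} (h : e < d) : coeff e (B ^ d) = 0 := by
  rw [B, mul_pow, coeff_X_pow_mul', if_neg (by omega)]

-- the main binomial identity
lemma binom_id (r q : ℕ) :
    (((r:ℚ)+1)/((r:ℚ)+q+2)) * (Nat.choose (r+2*q+2) (r+q+1) : ℚ)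
      = ((r:ℚ)/((r:ℚ)+q+1)) * (Nat.choose (r+2*q+1) (r+q) : ℚ)
        + (((r:ℚ)+2)/((r:ℚ)+q+2)) * (Nat.choose (r+2*q+1) (r+q+1) : ℚ) := by
  rw [Nat.cast_choose ℚ (by omega : r+q+1 ≤ r+2*q+2),
      Nat.cast_choose ℚ (by omega : r+q ≤ r+2*q+1),
      Nat.cast_choose ℚ (by omega : r+q+1 ≤ r+2*q+1)]
  have h1 : r+2*q+2-(r+q+1) = q+1 := by omega
  have h2 : r+2*q+1-(r+q) = q+1 := by omega
  have h3 : r+2*q+1-(r+q+1) = q := by omega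
  rw [h1, h2, h3]
  have e1 : (r+2*q+2).factorial = (r+2*q+2) * (r+2*q+1).factorial := by
    rw [show r+2*q+2 = (r+2*q+1)+1 by omega, Nat.factorial_succ]
  have e2 : (r+q+1).factorial = (r+q+1) * (r+q).factorial := Nat.factorial_succ _
  have e3 : (q+1).factorial = (q+1) * (q).factorial := Nat.factorial_succ _
  rw [e1, e2, e3]
  push_cast
  have f1 : ((r+2*q+1).factorial : ℚ) ≠ 0 := by positivity
  have f2 : ((r+q).factorial : ℚ) ≠ 0 := by positivity
  have f3 : ((q).factorial : ℚ) ≠ 0 := by positivity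
  have f4 : ((r:ℚ)+q+2) ≠ 0 := by positivity
  have f5 : ((r:ℚ)+q+1) ≠ 0 := by positivity
  have f6 : ((q:ℚ)+1) ≠ 0 := by positivity
  field_simp
  ring

lemma T1_rec {e d : ℕ} (hd : 1 ≤ d) (hde : d < e) :
    T1 e d = T1 (e-1) (d-1) + T1 e (d+1) := by
  obtain ⟨r, q, hd2, he⟩ : ∃ r q, d = r + 1 ∧ e = r + q + 2 :=
    ⟨d - 1, e - d - 1, by omega, by omega⟩
  have c1 : 2*e-d-1 = r+2*q+2 := by omega
  have c2 : e-1 = r+q+1 := by omega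
  have c3 : 2*(e-1)-(d-1)-1 = r+2*q+1 := by omega
  have c4 : e-1-1 = r+q := by omega
  have c5 : 2*e-(d+1)-1 = r+2*q+1 := by omega
  have cd : (d:ℚ) = (r:ℚ)+1 := by rw [hd2]; push_cast; ring
  have ce : (e:ℚ) = (r:ℚ)+q+2 := by rw [he]; push_cast; ring
  have cd1 : ((d+1:ℕ):ℚ) = (r:ℚ)+2 := by rw [hd2]; push_cast; ring
  have hmid : T1 (e-1) (d-1)
      = ((r:ℚ)/((r:ℚ)+q+1)) * (Nat.choose (r+2*q+1) (r+q) : ℚ) := by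
    rcases Nat.eq_zero_or_pos r with hr0 | hr0
    · subst hr0
      rw [T1, if_neg (by omega), if_neg (by omega)]
      simp
    · rw [T1, if_neg (by omega), if_pos (by omega), c3, c4]
      have : ((d-1:ℕ):ℚ) = (r:ℚ) := by rw [hd2]; simp
      have he1 : ((e-1:ℕ):ℚ) = (r:ℚ)+q+1 := by rw [he]; push_cast [show r+q+2-1 = r+q+1 from by omega]; ring
      rw [this, he1]
  rw [hmid, T1, if_neg (by omega), if_pos (by omega), T1, if_neg (by omega)]
  rcases Nat.lt_or_ge (d+1) (e+1) with hlt | hge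
  · rcases Nat.eq_or_lt_of_le (Nat.lt_succ_iff.mp hlt) with heq | hlt2
    · -- d + 1 = e : third T1 term, still in range
      rw [if_pos (by omega), c1, c2, c5, cd, ce, cd1]
      exact binom_id r q
    · rw [if_pos (by omega), c1, c2, c5, cd, ce, cd1]
      exact binom_id r q
  · omega

lemma T1_diag (n : ℕ) : T1 n n = 1 := by
  rcases Nat.eq_zero_or_pos n with h | h
  · subst h; simp [T1]
  · rw [T1, if_neg (by omega), if_pos (by omega), show 2*n-n-1 = n-1 by omega,
        Nat.choose_self]
    have : (n:ℚ) ≠ 0 := by positivity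
    field_simp
    exact Nat.cast_one

lemma T1_zero_of_lt {e d : ℕ} (h : e < d) : T1 e d = 0 := by
  rw [T1, if_neg (by omega), if_neg (by omega)]

lemma B_pow_rec (d : ℕ) : B^(d+1) = X * B^d + B^(d+2) := by
  have h : B^(d+1) = B^d * (X + B^2) := by rw [← B_eq]; ring
  rw [h]; ring

lemma coeff_B_pow : ∀ e d, coeff e (B ^ d) = T1 e d := by
  intro e
  induction e using Nat.strong_induction_on with
  | _ e ih =>
    suffices h : ∀ m d, e ≤ d + m → coeff e (B ^ d) = T1 e d from fun d => h e d (by omega)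
    intro m
    induction m with
    | zero =>
      intro d hd
      rcases Nat.lt_or_ge e d with hlt | hge
      · rw [coeff_B_pow_zero_of_lt hlt, T1_zero_of_lt hlt]
      · have hde : d = e := by omega
        subst hde
        cases d with
        | zero => simp [T1]
        | succ n =>
          rw [B_pow_rec n, map_add, coeff_succ_X_mul, ih n (by omega) n,
              coeff_B_pow_zero_of_lt (e := n+1) (d := n+2) (by omega),
              T1_diag, T1_diag, add_zero]
    | succ m ihm =>
      intro d hd
      rcases le_or_gt e (d + m) with h | h
      · exact ihm d h
      · cases d with
        | zero =>
          rw [pow_zero, T1, if_neg (by omega), if_neg (by omega), coeff_one,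
              if_neg (by omega)]
        | succ d =>
          obtain ⟨n, hn⟩ : ∃ n, e = n + 1 := ⟨e - 1, by omega⟩
          subst hn
          rw [B_pow_rec d, map_add, coeff_succ_X_mul, ih n (by omega) d,
              ihm (d+2) (by omega)]
          have := T1_rec (e := n+1) (d := d+1) (by omega) (by omega)
          simpa using this.symm

lemma mk_T1_eq (d : ℕ) : PowerSeries.mk (fun e => T1 e d) = B ^ d := by
  ext e
  rw [coeff_mk, coeff_B_pow]

/-- `G₁(t,x) = 1 + t·x·G₁(t,x)·C(t)`. -/
theorem stmt14 :
    G1 = 1 + PowerSeries.C (PowerSeries.X : PowerSeries ℚ) * PowerSeries.X * G1 *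
      PowerSeries.C catalanPS := by
  refine PowerSeries.ext fun d => ?_
  rw [map_add,
      show PowerSeries.C (PowerSeries.X : PowerSeries ℚ) * PowerSeries.X * G1 *
          PowerSeries.C catalanPS
        = PowerSeries.C (PowerSeries.X * catalanPS) * (PowerSeries.X * G1) by
        rw [map_mul]; ring,
      coeff_C_mul]
  cases d with
  | zero =>
    have h0 : coeff 0 (X * G1) = 0 := by
      rw [coeff_zero_eq_constantCoeff, map_mul, constantCoeff_X, zero_mul]
    rw [h0, mul_zero, add_zero, G1, coeff_mk, mk_T1_eq, pow_zero, coeff_one, if_pos rfl]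
  | succ d =>
    rw [coeff_one, if_neg (by omega), coeff_succ_X_mul, G1, coeff_mk, coeff_mk,
        mk_T1_eq, mk_T1_eq, zero_add, show PowerSeries.X * catalanPS = B from rfl]
    rw [pow_succ']
end

section
/- For all non-negative integers n, r, s, the sum S₅(n,r,s) = Σ_{k=0}^{n} C(2n−2k+s, n−k)·C(2k+r, k) satisfies S₅(n, d₁+d₂−4, d₃) + S₅(n, d₁+d₃−4, d₂) − S₅(n, d₁−2, d₂+d₃−2) − S₅(n, d₁+d₂+d₃−6, 2) = 0, for integers d₁ ≥ 2, d₂ ≥ 2, d₃ ≥ 2 and n ≥ 0. -/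
/-- `S₅(n,r,s) = Σ_{k=0}^{n} C(2n−2k+s, n−k)·C(2k+r, k)`. -/
def S5 (n r s : ℕ) : ℕ :=
  ∑ k ∈ Finset.range (n + 1), Nat.choose (2 * n - 2 * k + s) (n - k) * Nat.choose (2 * k + r) k

/-- Antidiagonal form of `S5`. -/
def G5 (n r s : ℕ) : ℕ :=
  ∑ p ∈ Finset.HasAntidiagonal.antidiagonal n, Nat.choose (2 * p.1 + s) p.1 * Nat.choose (2 * p.2 + r) p.2

lemma S5_eq_G5 (n r s : ℕ) : S5 n r s = G5 n r s := by
  rw [S5, G5, ← Finset.Nat.sum_antidiagonal_swap]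
  simp only [Prod.fst_swap, Prod.snd_swap]
  rw [Finset.Nat.sum_antidiagonal_eq_sum_range_succ
    (fun i j => Nat.choose (2 * j + s) j * Nat.choose (2 * i + r) i)]
  apply Finset.sum_congr rfl
  intro k hk
  simp only [Finset.mem_range] at hk
  have hkn : k ≤ n := Nat.lt_succ_iff.mp hk
  have h : 2 * n - 2 * k = 2 * (n - k) := by omega
  simp [h]

lemma G5_succ_s (n r s : ℕ) :
    G5 (n + 1) r (s + 1) = G5 (n + 1) r s + G5 n r (s + 2) := by
  rw [G5, G5, G5, Finset.Nat.sum_antidiagonal_succ, Finset.Nat.sum_antidiagonal_succ]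
  simp only [Nat.choose_zero_right, one_mul, Nat.choose_zero_right, Nat.mul_zero, Nat.zero_add]
  rw [add_right_comm, add_assoc, ← Finset.sum_add_distrib]
  congr 1
  apply Finset.sum_congr rfl
  intro p _
  have h1 : 2 * (p.1 + 1) + (s + 1) = (2 * p.1 + s + 2) + 1 := by ring
  have h2 : 2 * (p.1 + 1) + s = 2 * p.1 + s + 2 := by ring
  rw [h1, h2, Nat.choose_succ_succ (2 * p.1 + s + 2) p.1]
  simp only [Nat.succ_eq_add_one, Nat.add_comm 1]
  ring

lemma G5_succ_r (n r s : ℕ) :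
    G5 (n + 1) (r + 1) s = G5 (n + 1) r s + G5 n (r + 2) s := by
  rw [G5, G5, G5, Finset.Nat.sum_antidiagonal_succ', Finset.Nat.sum_antidiagonal_succ']
  simp only [Nat.choose_zero_right, mul_one, Nat.mul_zero, Nat.zero_add]
  rw [add_right_comm, add_assoc, ← Finset.sum_add_distrib]
  congr 1
  apply Finset.sum_congr rfl
  intro p _
  have h1 : 2 * (p.2 + 1) + (r + 1) = (2 * p.2 + r + 2) + 1 := by ring
  have h2 : 2 * (p.2 + 1) + r = 2 * p.2 + r + 2 := by ring
  rw [h1, h2, Nat.choose_succ_succ (2 * p.2 + r + 2) p.2]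
  simp only [Nat.succ_eq_add_one, Nat.add_comm 1]
  ring

lemma G5_shift (n : ℕ) : ∀ r s, G5 n r (s + 1) = G5 n (r + 1) s := by
  induction n with
  | zero =>
      intro r s
      simp [G5, Finset.Nat.antidiagonal_zero]
  | succ n ih =>
      intro r s
      rw [G5_succ_s, G5_succ_r]
      congr 1
      rw [show s + 2 = (s + 1) + 1 from rfl, ih r (s + 1), ih (r + 1) s]

lemma G5_add (n r s : ℕ) : G5 n r s = G5 n (r + s) 0 := by
  induction s generalizing r with
  | zero => rfl
  | succ s ih =>
      rw [G5_shift, ih (r + 1)]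
      congr 1
      omega

lemma S5_inv (n r s r' s' : ℕ) (h : r + s = r' + s') : S5 n r s = S5 n r' s' := by
  rw [S5_eq_G5, S5_eq_G5, G5_add, G5_add n r' s', h]

theorem stmt15 (n d1 d2 d3 : ℕ) (h1 : 2 ≤ d1) (h2 : 2 ≤ d2) (h3 : 2 ≤ d3) :
    (S5 n (d1 + d2 - 4) d3 : ℤ) + S5 n (d1 + d3 - 4) d2
      - S5 n (d1 - 2) (d2 + d3 - 2) - S5 n (d1 + d2 + d3 - 6) 2 = 0 := by
  have e1 : S5 n (d1 + d2 - 4) d3 = S5 n (d1 + d2 + d3 - 4) 0 := S5_inv _ _ _ _ _ (by omega)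
  have e2 : S5 n (d1 + d3 - 4) d2 = S5 n (d1 + d2 + d3 - 4) 0 := S5_inv _ _ _ _ _ (by omega)
  have e3 : S5 n (d1 - 2) (d2 + d3 - 2) = S5 n (d1 + d2 + d3 - 4) 0 := S5_inv _ _ _ _ _ (by omega)
  have e4 : S5 n (d1 + d2 + d3 - 6) 2 = S5 n (d1 + d2 + d3 - 4) 0 := S5_inv _ _ _ _ _ (by omega)
  rw [e1, e2, e3, e4]
  ring
end

section
/- For every non-negative integer n and non-negative integers r, s, Σ_{k=0}^{⌊n/2⌋} C(2n+2+r+s, n−2k) = Σ_{l=0}^{n} C(2n+1+r+s, l). -/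
lemma aux17 : ∀ (n m : ℕ),
    ∑ k ∈ Finset.range (n / 2 + 1), Nat.choose (m + 1) (n - 2 * k)
      = ∑ l ∈ Finset.range (n + 1), Nat.choose m l
  | 0, m => by simp
  | 1, m => by simp [Finset.sum_range_succ]; omega
  | (n + 2), m => by
    have h : (n + 2) / 2 + 1 = (n / 2 + 1) + 1 := by omega
    rw [h, Finset.sum_range_succ']
    have h2 : ∀ k, n + 2 - 2 * (k + 1) = n - 2 * k := by intro k; omega
    simp only [h2, Nat.mul_zero, Nat.sub_zero]
    rw [aux17 n m]
    conv_rhs => rw [Finset.sum_range_succ, Finset.sum_range_succ]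
    rw [Nat.choose_succ_succ m (n + 1)]
    ring

theorem stmt17 (n r s : ℕ) :
    ∑ k ∈ Finset.range (n / 2 + 1), Nat.choose (2 * n + 2 + r + s) (n - 2 * k)
      = ∑ l ∈ Finset.range (n + 1), Nat.choose (2 * n + 1 + r + s) l := by
  have := aux17 n (2 * n + 1 + r + s)
  have e : 2 * n + 1 + r + s + 1 = 2 * n + 2 + r + s := by omega
  rwa [e] at this
end

section
/- For all non-negative integers n and integers r, s, t with the convention that the factor r/(tk+r) times C(tk+r,k) is interpreted via cancellation when tk+r=0, Σ_{k=0}^{n} (r/(tk+r))·C(tk+r, k)·C(tn−tk+s, n−k) = C(tn+r+s, n), specialized to t=2, r≥1, s≥0: Σ_{k=0}^{n} (r/(2k+r))·C(2k+r,k)·C(2n−2k+s, n−k) = C(2n+r+s, n). -/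
/-- Cancellation form of the Rothe coefficient at index `k+1`:
`r/(2(k+1)+r) * C(2(k+1)+r, k+1) = C(2(k+1)+r, k+1) - 2*C(2k+r+1, k)`. -/
private lemma rothe_coeff (r k : ℕ) :
    (r : ℚ) / (2 * ((k + 1 : ℕ) : ℚ) + (r : ℚ)) * ((2 * (k + 1) + r).choose (k + 1) : ℚ)
      = ((2 * (k + 1) + r).choose (k + 1) : ℚ) - 2 * ((2 * k + r + 1).choose k : ℚ) := by
  have h1 : (2 * (k + 1) + r).choose (k + 1)
      = (2 * k + r + 1).choose k + (2 * k + r + 1).choose (k + 1) := by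
    rw [show 2 * (k + 1) + r = (2 * k + r + 1) + 1 from by ring]
    exact Nat.choose_succ_succ _ _
  have h2 : (2 * k + r + 1).choose (k + 1) * (k + 1)
      = (2 * k + r + 1).choose k * (k + r + 1) := by
    have h := Nat.choose_succ_right_eq (2 * k + r + 1) k
    rwa [show 2 * k + r + 1 - k = k + r + 1 from by omega] at h
  have hc1 : ((2 * (k + 1) + r).choose (k + 1) : ℚ)
      = ((2 * k + r + 1).choose k : ℚ) + ((2 * k + r + 1).choose (k + 1) : ℚ) := by
    exact_mod_cast h1
  have hc2 : ((2 * k + r + 1).choose (k + 1) : ℚ) * (k + 1)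
      = ((2 * k + r + 1).choose k : ℚ) * (k + r + 1) := by exact_mod_cast h2
  have hne : 2 * ((k + 1 : ℕ) : ℚ) + (r : ℚ) ≠ 0 := by positivity
  rw [div_mul_eq_mul_div, div_eq_iff hne, hc1]
  push_cast
  linear_combination -2 * hc2

/-- `C(2m+2, m+1) = 2 * C(2m+1, m)`. -/
private lemma central_double (m : ℕ) :
    (2 * m + 2).choose (m + 1) = 2 * ((2 * m + 1).choose m) := by
  have h1 : (2 * m + 2).choose (m + 1)
      = (2 * m + 1).choose m + (2 * m + 1).choose (m + 1) := by
    rw [show 2 * m + 2 = (2 * m + 1) + 1 from by ring]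
    exact Nat.choose_succ_succ _ _
  have h2 : (2 * m + 1).choose (m + 1) = (2 * m + 1).choose m := by
    rw [← Nat.choose_symm (show m + 1 ≤ 2 * m + 1 by omega)]
    congr 1
    omega
  omega

/-- Rothe–Hagen convolution identity specialized to `t = 2`, `r ≥ 1`, `s ≥ 0`. -/
theorem stmt18 (n r s : ℕ) (hr : 1 ≤ r) :
    ∑ k ∈ Finset.range (n + 1),
        (r : ℚ) / (2 * k + r) * Nat.choose (2 * k + r) k * Nat.choose (2 * n - 2 * k + s) (n - k)
      = Nat.choose (2 * n + r + s) n := by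
  induction n generalizing r s hr with
  | zero =>
      have hrne : (r : ℚ) ≠ 0 := by positivity
      simp [div_self hrne]
  | succ n ihn =>
      induction s with
      | zero =>
          -- peel off the last term (k = n+1)
          rw [Finset.sum_range_succ]
          -- rewrite the remaining sum using C(2m+2, m+1) = 2*C(2m+1, m)
          have hsum : ∑ k ∈ Finset.range (n + 1),
                (r : ℚ) / (2 * k + r) * Nat.choose (2 * k + r) k
                  * Nat.choose (2 * (n + 1) - 2 * k + 0) (n + 1 - k)
              = 2 * ∑ k ∈ Finset.range (n + 1),
                (r : ℚ) / (2 * k + r) * Nat.choose (2 * k + r) k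
                  * Nat.choose (2 * n - 2 * k + 1) (n - k) := by
            rw [Finset.mul_sum]
            refine Finset.sum_congr rfl fun k hk => ?_
            have hk' : k ≤ n := Nat.lt_succ_iff.mp (Finset.mem_range.mp hk)
            have e1 : 2 * (n + 1) - 2 * k + 0 = 2 * (n - k) + 2 := by omega
            have e2 : n + 1 - k = (n - k) + 1 := by omega
            have e3 : 2 * n - 2 * k + 1 = 2 * (n - k) + 1 := by omega
            rw [e1, e2, e3, central_double (n - k)]
            push_cast
            ring
          rw [hsum, ihn r 1 hr]
          -- last term: apply the cancellation identity
          have hlast : ((2 * (n + 1) - 2 * (n + 1) + 0).choose (n + 1 - (n + 1)) : ℚ) = 1 := by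
            norm_num
          rw [hlast, mul_one, rothe_coeff r n]
          ring_nf
      | succ s ihs =>
          -- Pascal split of the second factor for k ≤ n
          have hsplit : ∀ k ∈ Finset.range (n + 1),
              (((2 * (n + 1) - 2 * k + (s + 1)).choose (n + 1 - k)) : ℚ)
                = ((2 * (n + 1) - 2 * k + s).choose (n + 1 - k) : ℚ)
                  + ((2 * n - 2 * k + (s + 2)).choose (n - k) : ℚ) := by
            intro k hk
            have hk' : k ≤ n := Nat.lt_succ_iff.mp (Finset.mem_range.mp hk)
            have e1 : 2 * (n + 1) - 2 * k + (s + 1) = (2 * (n - k) + s + 2) + 1 := by omega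
            have e2 : n + 1 - k = (n - k) + 1 := by omega
            have e3 : 2 * (n + 1) - 2 * k + s = 2 * (n - k) + s + 2 := by omega
            have e4 : 2 * n - 2 * k + (s + 2) = 2 * (n - k) + s + 2 := by omega
            rw [e1, e2, e3, e4, Nat.choose_succ_succ]
            push_cast
            ring
          rw [Finset.sum_range_succ]
          have hdistrib : ∑ k ∈ Finset.range (n + 1),
                (r : ℚ) / (2 * k + r) * Nat.choose (2 * k + r) k
                  * Nat.choose (2 * (n + 1) - 2 * k + (s + 1)) (n + 1 - k)
              = (∑ k ∈ Finset.range (n + 1),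
                  (r : ℚ) / (2 * k + r) * Nat.choose (2 * k + r) k
                    * Nat.choose (2 * (n + 1) - 2 * k + s) (n + 1 - k))
                + ∑ k ∈ Finset.range (n + 1),
                  (r : ℚ) / (2 * k + r) * Nat.choose (2 * k + r) k
                    * Nat.choose (2 * n - 2 * k + (s + 2)) (n - k) := by
            rw [← Finset.sum_add_distrib]
            refine Finset.sum_congr rfl fun k hk => ?_
            rw [hsplit k hk]
            ring
          rw [hdistrib, ihn r (s + 2) hr]
          -- combine the first sum with the k = n+1 term to apply ihs
          have hlast1 : ((2 * (n + 1) - 2 * (n + 1) + (s + 1)).choose (n + 1 - (n + 1)) : ℚ)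
              = ((2 * (n + 1) - 2 * (n + 1) + s).choose (n + 1 - (n + 1)) : ℚ) := by
            norm_num
          rw [hlast1]
          have hsum2 : (∑ k ∈ Finset.range (n + 1),
                (r : ℚ) / (2 * k + r) * Nat.choose (2 * k + r) k
                  * Nat.choose (2 * (n + 1) - 2 * k + s) (n + 1 - k))
              + (r : ℚ) / (2 * ((n + 1 : ℕ) : ℚ) + r) * Nat.choose (2 * (n + 1) + r) (n + 1)
                  * Nat.choose (2 * (n + 1) - 2 * (n + 1) + s) (n + 1 - (n + 1))
              = ∑ k ∈ Finset.range (n + 1 + 1),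
                  (r : ℚ) / (2 * k + r) * Nat.choose (2 * k + r) k
                    * Nat.choose (2 * (n + 1) - 2 * k + s) (n + 1 - k) := by
            conv_rhs => rw [Finset.sum_range_succ]
          rw [add_right_comm, hsum2, ihs]
          have hp : (2 * (n + 1) + r + (s + 1)).choose (n + 1)
              = (2 * (n + 1) + r + s).choose (n + 1) + (2 * n + r + (s + 2)).choose n := by
            have h := Nat.choose_succ_succ (2 * (n + 1) + r + s) n
            simp only [Nat.succ_eq_add_one] at h
            rw [show 2 * (n + 1) + r + (s + 1) = (2 * (n + 1) + r + s) + 1 from by ring,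
                show 2 * n + r + (s + 2) = 2 * (n + 1) + r + s from by ring, h]
            omega
          rw [hp]
          push_cast
          ring
end
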